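/- arXiv:2208.01726 — 2 statements merged into one kernel-verified Lean document; each statement's English description precedes it below -/
import Mathlib

section
/- Let X be Gamma(m₁, θ₁) and Y be Gamma(m₂, θ₂) independent, and Z an independent nonnegative random variable with density f and finite m-th moment for m = min(m₁, m₂). Suppose θᵢ = Ωᵢ γ̄/mᵢ. Then P[min(X,Y) < Z] → 0 as γ̄ → ∞, and moreover P[min(X,Y) < Z] = O(γ̄^{-min(m₁,m₂)}). -/
open Real MeasureTheory Filter Asymptotics Set

/-!
The Gamma CDF obeys `F(x) ≤ min(1, (x / θ) ^ m / Γ(m + 1))`; with `θ = Ω γ̄ / m` this is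
`min(1, c (x / γ̄) ^ m) ≤ max(1, c) (x / γ̄) ^ a` for every `a ≤ m`. Since
`1 - F̄_X F̄_Y ≤ F_X + F_Y`, taking `a = min(m₁, m₂)` bounds the integrand by
`C γ̄ ^ (-a) x ^ a f(x)`, which is integrable by the moment assumption.
-/

/-- The complementary CDF of a Gamma random variable with shape `m` and scale `θ`. -/
noncomputable def gammaCCDF (m θ x : ℝ) : ℝ :=
    ∫ t in Set.Ioi x, t ^ (m - 1) * Real.exp (-t / θ) / (Real.Gamma m * θ ^ m)

noncomputable def gammaDensity (m θ t : ℝ) : ℝ :=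
  t ^ (m - 1) * exp (-t / θ) / (Gamma m * θ ^ m)

section GammaDensity

variable {m θ : ℝ}

lemma gammaCCDF_eq_integral_gammaDensity (x : ℝ) :
    gammaCCDF m θ x = ∫ t in Ioi x, gammaDensity m θ t :=
  rfl

lemma gammaDensity_nonneg (hm : 0 < m) (hθ : 0 < θ) {t : ℝ} (ht : 0 ≤ t) :
    0 ≤ gammaDensity m θ t := by
  have := Gamma_pos_of_pos hm
  have := rpow_pos_of_pos hθ m
  unfold gammaDensity
  positivity

lemma integrableOn_gammaDensity (hm : 0 < m) (hθ : 0 < θ) :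
    IntegrableOn (gammaDensity m θ) (Ioi 0) := by
  have h := integrableOn_rpow_mul_exp_neg_mul_rpow (p := 1) (s := m - 1) (b := θ⁻¹)
    (by linarith) one_pos (inv_pos.2 hθ)
  refine IntegrableOn.congr_fun (h.div_const (Gamma m * θ ^ m)) (fun t _ => ?_) measurableSet_Ioi
  simp only [gammaDensity, rpow_one]
  ring_nf

lemma integral_gammaDensity (hm : 0 < m) (hθ : 0 < θ) :
    ∫ t in Ioi 0, gammaDensity m θ t = 1 := by
  have h := integral_rpow_mul_exp_neg_mul_Ioi hm (inv_pos.2 hθ)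
  rw [one_div, inv_inv] at h
  have hΓ := Gamma_pos_of_pos hm
  have hθm := rpow_pos_of_pos hθ m
  simp only [gammaDensity, integral_div]
  rw [div_eq_one_iff_eq (by positivity), ← mul_comm (θ ^ m), ← h]
  refine setIntegral_congr_fun measurableSet_Ioi fun t _ => ?_
  ring_nf

lemma gammaCCDF_nonneg (hm : 0 < m) (hθ : 0 < θ) {x : ℝ} (hx : 0 ≤ x) :
    0 ≤ gammaCCDF m θ x :=
  setIntegral_nonneg measurableSet_Ioi fun _ ht => gammaDensity_nonneg hm hθ (hx.trans ht.le)

lemma gammaCCDF_le_one (hm : 0 < m) (hθ : 0 < θ) {x : ℝ} (hx : 0 ≤ x) :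
    gammaCCDF m θ x ≤ 1 := by
  rw [← integral_gammaDensity hm hθ, gammaCCDF_eq_integral_gammaDensity]
  exact setIntegral_mono_set (integrableOn_gammaDensity hm hθ)
    ((ae_restrict_mem measurableSet_Ioi).mono fun _ ht => gammaDensity_nonneg hm hθ (le_of_lt ht))
    (Ioi_subset_Ioi hx).eventuallyLE

lemma one_sub_gammaCCDF_le (hm : 0 < m) (hθ : 0 < θ) {x : ℝ} (hx : 0 ≤ x) :
    1 - gammaCCDF m θ x ≤ (x / θ) ^ m / Gamma (m + 1) := by
  have hΓ := Gamma_pos_of_pos hm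
  have hθm := rpow_pos_of_pos hθ m
  calc 1 - gammaCCDF m θ x = ∫ t in 0..x, gammaDensity m θ t := by
        rw [← integral_gammaDensity hm hθ, gammaCCDF_eq_integral_gammaDensity,
          intervalIntegral.integral_Ioi_sub_Ioi (integrableOn_gammaDensity hm hθ) hx]
    _ ≤ ∫ t in 0..x, t ^ (m - 1) / (Gamma m * θ ^ m) := by
        refine intervalIntegral.integral_mono_on hx ?_ ?_ fun t ht => ?_
        · exact (intervalIntegrable_iff_integrableOn_Ioc_of_le hx).2
            ((integrableOn_gammaDensity hm hθ).mono_set Ioc_subset_Ioi_self)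
        · exact (intervalIntegral.intervalIntegrable_rpow' (by linarith)).div_const _
        · have hexp : exp (-t / θ) ≤ 1 :=
            exp_le_one_iff.2 (div_nonpos_of_nonpos_of_nonneg (by linarith [ht.1]) hθ.le)
          exact div_le_div_of_nonneg_right
            (mul_le_of_le_one_right (rpow_nonneg ht.1 _) hexp) (by positivity)
    _ = (x / θ) ^ m / Gamma (m + 1) := by
        rw [intervalIntegral.integral_div, integral_rpow (Or.inl (by linarith)), sub_add_cancel,
          zero_rpow hm.ne', sub_zero, Gamma_add_one hm.ne', div_rpow hx hθ.le]
        field_simp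

end GammaDensity

lemma le_max_one_mul_rpow_of_le_mul_rpow {y c u a m : ℝ} (hy : y ≤ 1) (hyc : y ≤ c * u ^ m)
    (hu : 0 ≤ u) (ha : 0 ≤ a) (ham : a ≤ m) : y ≤ max 1 c * u ^ a := by
  rcases le_or_gt u 1 with hu1 | hu1
  · calc y ≤ c * u ^ m := hyc
      _ ≤ max 1 c * u ^ a := mul_le_mul (le_max_right 1 c)
          (rpow_le_rpow_of_exponent_ge' hu hu1 ha ham) (rpow_nonneg hu _)
          (zero_le_one.trans (le_max_left 1 c))
  · calc y ≤ 1 * 1 := by rw [mul_one]; exact hy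
      _ ≤ max 1 c * u ^ a := mul_le_mul (le_max_left 1 c) (one_le_rpow hu1.le ha) zero_le_one
          (zero_le_one.trans (le_max_left 1 c))

lemma exists_one_sub_gammaCCDF_le_rpow {m Ω a : ℝ} (hm : 0 < m) (hΩ : 0 < Ω) (ha : 0 ≤ a)
    (ham : a ≤ m) : ∃ C, ∀ γ, 0 < γ → ∀ x, 0 ≤ x →
      1 - gammaCCDF m (Ω * γ / m) x ≤ C * (x ^ a * γ ^ (-a)) := by
  refine ⟨max 1 ((m / Ω) ^ m / Gamma (m + 1)), fun γ hγ x hx => ?_⟩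
  have hθ : 0 < Ω * γ / m := by positivity
  rw [rpow_neg hγ.le, ← div_eq_mul_inv, ← div_rpow hx hγ.le]
  refine le_max_one_mul_rpow_of_le_mul_rpow (by linarith [gammaCCDF_nonneg hm hθ hx]) ?_
    (div_nonneg hx hγ.le) ha ham
  calc 1 - gammaCCDF m (Ω * γ / m) x ≤ (x / (Ω * γ / m)) ^ m / Gamma (m + 1) :=
        one_sub_gammaCCDF_le hm hθ hx
    _ = (m / Ω) ^ m / Gamma (m + 1) * (x / γ) ^ m := by
        rw [div_mul_eq_mul_div, ← mul_rpow (by positivity) (by positivity)]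
        congr 2
        field_simp

lemma norm_one_sub_mul_le {a b : ℝ} (ha₀ : 0 ≤ a) (ha₁ : a ≤ 1) (hb₁ : b ≤ 1) :
    ‖1 - a * b‖ ≤ (1 - a) + (1 - b) := by
  rw [Real.norm_of_nonneg (by nlinarith)]
  nlinarith

lemma isBigO_setIntegral_of_norm_le {α ι E : Type*} [MeasurableSpace α] [NormedAddCommGroup E]
    [NormedSpace ℝ E] {μ : Measure α} {s : Set α} {l : Filter ι} {g : ι → α → E}
    {φ : ι → ℝ} {h : α → ℝ} (hs : MeasurableSet s) (hh : IntegrableOn h s μ)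
    (hg : ∀ᶠ i in l, ∀ x ∈ s, ‖g i x‖ ≤ φ i * h x) :
    (fun i => ∫ x in s, g i x ∂μ) =O[l] φ := by
  refine isBigO_iff.2 ⟨‖∫ x in s, h x ∂μ‖, ?_⟩
  filter_upwards [hg] with i hi
  calc ‖∫ x in s, g i x ∂μ‖ ≤ ∫ x in s, φ i * h x ∂μ :=
        norm_integral_le_of_norm_le (hh.const_mul _) (ae_restrict_of_forall_mem hs hi)
    _ = φ i * ∫ x in s, h x ∂μ := integral_const_mul _ _
    _ ≤ ‖∫ x in s, h x ∂μ‖ * ‖φ i‖ := by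
        rw [mul_comm, ← norm_mul]
        exact le_norm_self _

theorem stmt_16_general (m₁ m₂ Ω₁ Ω₂ : ℝ) (hm₁ : 0 < m₁) (hm₂ : 0 < m₂)
    (hΩ₁ : 0 < Ω₁) (hΩ₂ : 0 < Ω₂)
    (f : ℝ → ℝ) (hfpos : ∀ x, 0 ≤ f x)
    (hmoment : IntegrableOn (fun x => x ^ min m₁ m₂ * f x) (Set.Ioi 0))
    (P : ℝ → ℝ)
    (hP : ∀ γ : ℝ, 0 < γ → P γ = ∫ x in Set.Ioi (0 : ℝ),
      (1 - gammaCCDF m₁ (Ω₁ * γ / m₁) x * gammaCCDF m₂ (Ω₂ * γ / m₂) x) * f x) :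
    Tendsto P atTop (nhds 0) ∧ P =O[atTop] fun γ : ℝ => γ ^ (-(min m₁ m₂)) := by
  set m := min m₁ m₂
  have hm : 0 < m := lt_min hm₁ hm₂
  obtain ⟨C₁, hC₁⟩ := exists_one_sub_gammaCCDF_le_rpow hm₁ hΩ₁ hm.le (min_le_left m₁ m₂)
  obtain ⟨C₂, hC₂⟩ := exists_one_sub_gammaCCDF_le_rpow hm₂ hΩ₂ hm.le (min_le_right m₁ m₂)
  have hbound : ∀ᶠ γ in atTop, ∀ x ∈ Ioi (0 : ℝ),
      ‖(1 - gammaCCDF m₁ (Ω₁ * γ / m₁) x * gammaCCDF m₂ (Ω₂ * γ / m₂) x) * f x‖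
        ≤ (C₁ + C₂) * γ ^ (-m) * (x ^ m * f x) := by
    filter_upwards [eventually_gt_atTop 0] with γ hγ x hx
    have hθ₁ : 0 < Ω₁ * γ / m₁ := by positivity
    have hθ₂ : 0 < Ω₂ * γ / m₂ := by positivity
    rw [norm_mul, Real.norm_of_nonneg (hfpos x)]
    have hF₁ := hC₁ γ hγ x hx.le
    have hF₂ := hC₂ γ hγ x hx.le
    set F₁ := gammaCCDF m₁ (Ω₁ * γ / m₁) x
    set F₂ := gammaCCDF m₂ (Ω₂ * γ / m₂) x
    calc ‖1 - F₁ * F₂‖ * f x ≤ ((1 - F₁) + (1 - F₂)) * f x :=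
          mul_le_mul_of_nonneg_right (norm_one_sub_mul_le (gammaCCDF_nonneg hm₁ hθ₁ hx.le)
            (gammaCCDF_le_one hm₁ hθ₁ hx.le) (gammaCCDF_le_one hm₂ hθ₂ hx.le)) (hfpos x)
      _ ≤ (C₁ * (x ^ m * γ ^ (-m)) + C₂ * (x ^ m * γ ^ (-m))) * f x :=
          mul_le_mul_of_nonneg_right (add_le_add hF₁ hF₂) (hfpos x)
      _ = (C₁ + C₂) * γ ^ (-m) * (x ^ m * f x) := by ring
  have hO : P =O[atTop] fun γ => γ ^ (-m) := by
    refine ((isBigO_setIntegral_of_norm_le measurableSet_Ioi hmoment hbound).trans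
      (isBigO_const_mul_self _ _ _)).congr' ?_ EventuallyEq.rfl
    filter_upwards [eventually_gt_atTop 0] with γ hγ using (hP γ hγ).symm
  exact ⟨hO.trans_tendsto (tendsto_rpow_neg_atTop hm), hO⟩

/-- Let `X ~ Gamma(m₁, Ω₁ γ̄ / m₁)` and `Y ~ Gamma(m₂, Ω₂ γ̄ / m₂)` be independent,
and `Z` an independent nonnegative random variable with density `f` having a finite
`min(m₁,m₂)`-th moment. By independence,
`P[min(X,Y) < Z] = ∫₀^∞ (1 - F̄_X(x) F̄_Y(x)) f(x) dx`; this probability tends to `0`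
as `γ̄ → ∞` and is `O(γ̄^(-min(m₁,m₂)))`. -/
theorem stmt_16 (m₁ m₂ Ω₁ Ω₂ : ℝ) (hm₁ : 0 < m₁) (hm₂ : 0 < m₂)
    (hΩ₁ : 0 < Ω₁) (hΩ₂ : 0 < Ω₂)
    (f : ℝ → ℝ) (hfmeas : Measurable f) (hfpos : ∀ x, 0 ≤ f x)
    (hfone : ∫ x in Set.Ioi (0 : ℝ), f x = 1)
    (hmoment : IntegrableOn (fun x => x ^ min m₁ m₂ * f x) (Set.Ioi 0))
    (P : ℝ → ℝ)
    (hP : ∀ γ : ℝ, 0 < γ → P γ = ∫ x in Set.Ioi (0 : ℝ),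
      (1 - gammaCCDF m₁ (Ω₁ * γ / m₁) x * gammaCCDF m₂ (Ω₂ * γ / m₂) x) * f x) :
    Tendsto P atTop (nhds 0) ∧ P =O[atTop] fun γ : ℝ => γ ^ (-(min m₁ m₂)) :=
  stmt_16_general m₁ m₂ Ω₁ Ω₂ hm₁ hm₂ hΩ₁ hΩ₂ f hfpos hmoment P hP
end

section
/- For every integer n ≥ 1, the shape parameter m(n) = (K/2)·(φ₁² π²/16)/(1 + φ₂ - 2 φ₁² π²/16), where φ_k = sinc(kπ/2^n) = 2^{n}sin(kπ/2^n)/(kπ) for k = 1, 2, is positive, i.e., the denominator 1 + φ₂ - 2φ₁² π²/16 > 0. -/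
open Real

theorem denom_key (n : ℕ) (hn : 1 ≤ n) :
    0 < 1 + Real.sin (π / 2 ^ (n - 1)) / (π / 2 ^ (n - 1)) -
        2 * (Real.sin (π / 2 ^ n) / (π / 2 ^ n)) ^ 2 * π ^ 2 / 16 := by
  have hpi := Real.pi_pos
  obtain ⟨k, rfl⟩ := Nat.exists_eq_add_of_le hn
  simp only [Nat.add_sub_cancel_left, Nat.add_sub_cancel]
  rcases Nat.eq_zero_or_pos k with rfl | hk
  · norm_num [Real.sin_pi_div_two]
    have h : (2:ℝ) * (2/π)^2 * π^2/16 = 1/2 := by field_simp; ring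
    rw [h]; norm_num
  · set x : ℝ := π / 2 ^ (1 + k) with hxdef
    have hxpos : 0 < x := by positivity
    have h2x : π / 2 ^ k = 2 * x := by
      rw [hxdef, pow_add]; ring
    have hxle : 2 * x ≤ π / 2 := by
      rw [← h2x]
      rw [div_le_div_iff₀ (by positivity) (by norm_num)]
      have h2 : (2:ℝ) ≤ 2 ^ k := by
        calc (2:ℝ) = 2^1 := by norm_num
        _ ≤ 2^k := by exact pow_le_pow_right₀ (by norm_num) hk
      nlinarith
    -- φ₂ ≥ 2/π
    have hphi2 : 2 / π ≤ Real.sin (2 * x) / (2 * x) := by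
      rw [le_div_iff₀ (by positivity)]
      have := Real.mul_le_sin (x := 2 * x) (by positivity) hxle
      linarith [this]
    -- (sin x / x)^2 ≤ 1
    have hs1 : Real.sin x ≤ x := le_of_lt (Real.sin_lt hxpos)
    have hs0 : 0 ≤ Real.sin x := Real.sin_nonneg_of_nonneg_of_le_pi (le_of_lt hxpos) (by nlinarith)
    have hsq : (Real.sin x / x) ^ 2 ≤ 1 := by
      have : Real.sin x / x ≤ 1 := by rw [div_le_one hxpos]; exact hs1
      have h0 : 0 ≤ Real.sin x / x := by positivity
      nlinarith
    rw [h2x]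
    have hnum : 1 + 2 / π - 2 * 1 * π ^ 2 / 16 > 0 := by
      have hlt := Real.pi_lt_d2
      have hgt := Real.pi_gt_d6
      rw [gt_iff_lt, show (2:ℝ) * 1 * π^2 / 16 = π^2/8 by ring]
      rw [show (1:ℝ) + 2/π - π^2/8 = (8*π + 16 - π^3) / (8*π) by field_simp; ring]
      apply div_pos
      · have h3 : π^3 < 3.15^3 := pow_lt_pow_left₀ hlt hpi.le (by norm_num)
        nlinarith
      · positivity
    have hπ2 : (0:ℝ) < π ^ 2 := by positivity
    nlinarith [hphi2, hsq]

/-- For every integer `n ≥ 1`, with `φ₁ = sin(π/2ⁿ)/(π/2ⁿ)` and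
`φ₂ = sin(π/2^(n-1))/(π/2^(n-1))`, the denominator `1 + φ₂ - 2 φ₁² π²/16` of the Gamma
shape parameter is positive, and hence for any number of reflecting elements `K ≥ 1`
the shape parameter `m(n) = (K/2)(φ₁² π²/16)/(1 + φ₂ - 2 φ₁² π²/16)` is positive. -/
theorem stmt_18 (n : ℕ) (hn : 1 ≤ n) (K : ℝ) (hK : 1 ≤ K) :
    0 < 1 + Real.sin (π / 2 ^ (n - 1)) / (π / 2 ^ (n - 1)) -
        2 * (Real.sin (π / 2 ^ n) / (π / 2 ^ n)) ^ 2 * π ^ 2 / 16 ∧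
    0 < K / 2 * ((Real.sin (π / 2 ^ n) / (π / 2 ^ n)) ^ 2 * π ^ 2 / 16) /
        (1 + Real.sin (π / 2 ^ (n - 1)) / (π / 2 ^ (n - 1)) -
          2 * (Real.sin (π / 2 ^ n) / (π / 2 ^ n)) ^ 2 * π ^ 2 / 16) := by
  have hD := denom_key n hn
  refine ⟨hD, ?_⟩
  apply div_pos _ hD
  have hpi := Real.pi_pos
  have hxpos : 0 < π / 2 ^ n := by positivity
  have hsin : 0 < Real.sin (π / 2 ^ n) := by
    apply Real.sin_pos_of_pos_of_lt_pi hxpos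
    rw [div_lt_iff₀ (by positivity)]
    have : (1:ℝ) < 2 ^ n := by
      calc (1:ℝ) < 2^1 := by norm_num
      _ ≤ 2^n := pow_le_pow_right₀ (by norm_num) hn
    nlinarith
  positivity
end
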